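/- Let A be an algebraic curvature tensor on a finite-dimensional real inner product space V (possibly indefinite) and T a self-adjoint linear map. If A(Tx,y,z,w) + A(Tx,z,y,w) = A(Tw,y,z,x) + A(Tw,z,y,x) for all x,y,z,w in V (i.e. T commutes with every polarized Jacobi operator), then A(Tx,y,z,w) = A(x,Ty,z,w) = A(x,y,Tz,w) = A(x,y,z,Tw) for all x,y,z,w in V. -/
import Mathlib

set_option maxRecDepth 4000


/-- If `A` is an algebraic curvature tensor, `T` self-adjoint, and
`T` commutes with every polarized Jacobi operator, i.e.
`A(Tx,y,z,w) + A(Tx,z,y,w) = A(Tw,y,z,x) + A(Tw,z,y,x)` for all vectors,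
then `T` can be moved across all four slots of `A`. -/
theorem stmt_1 {V : Type*} [AddCommGroup V] [Module ℝ V] [FiniteDimensional ℝ V]
    (B : LinearMap.BilinForm ℝ V) (hBsymm : ∀ x y, B x y = B y x)
    (hBnd : B.Nondegenerate)
    (A : V →ₗ[ℝ] V →ₗ[ℝ] V →ₗ[ℝ] V →ₗ[ℝ] ℝ)
    (hpair : ∀ x y z w, A x y z w = A z w x y)
    (hanti : ∀ x y z w, A x y z w = -A y x z w)
    (hbianchi : ∀ x y z w, A x y z w + A y z x w + A z x y w = 0)
    (T : V →ₗ[ℝ] V) (hT : ∀ x y, B (T x) y = B x (T y))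
    (h : ∀ x y z w, A (T x) y z w + A (T x) z y w = A (T w) y z x + A (T w) z y x) :
    ∀ x y z w, A (T x) y z w = A x (T y) z w ∧ A x (T y) z w = A x y (T z) w ∧
      A x y (T z) w = A x y z (T w) := by
  intro x y z w
  refine ⟨?_, ?_, ?_⟩
  · linarith [hbianchi (T x) y z w, hanti x (T y) z w, hbianchi x (T y) z w, hpair x y (T z) w, hbianchi x y (T z) w, hpair x y z (T w), hanti x y z (T w), hbianchi (T x) y w z, hanti x (T y) w z, hbianchi x (T y) w z, hpair x y (T w) z, hanti x y (T w) z, hanti x y w (T z), hbianchi x y w (T z), hpair (T x) z y w, hanti (T x) z y w, hpair x (T z) y w, hbianchi x (T z) y w, hpair x z (T y) w, hanti x z (T y) w, hpair x (T z) w y, hanti x (T z) w y, hpair x z (T w) y, hbianchi x z (T w) y, hpair (T x) w y z, hanti (T x) w y z, hpair x w (T y) z, hanti x w (T y) z, hpair x w y (T z), hbianchi x w y (T z), hpair y x (T z) w, hpair y x z (T w), hpair y x (T w) z, hpair y (T z) w x, hanti y (T z) w x, hpair y z (T w) x, hbianchi y z (T w) x, h x y z w, h x y w z, h y x z w, h y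 x w z, h z x y w]
  · linarith [hanti (T x) y z w, hbianchi (T x) y z w, hanti x (T y) z w, hbianchi x (T y) z w, hpair x y (T z) w, hanti x y (T z) w, hbianchi x y (T z) w, hpair x y z (T w), hanti x y z (T w), hanti (T x) y w z, hbianchi (T x) y w z, hanti x (T y) w z, hbianchi x (T y) w z, hpair x y (T w) z, hanti x y (T w) z, hanti x y w (T z), hbianchi x y w (T z), hpair (T x) z y w, hanti (T x) z y w, hbianchi (T x) z y w, hpair x (T z) y w, hanti x (T z) y w, hbianchi x (T z) y w, hpair x z (T y) w, hanti x z (T y) w, hpair (T x) z w y, hpair x (T z) w y, hanti x (T z) w y, hpair x z (T w) y, hbianchi x z (T w) y, hpair (T x) w y z, hanti (T x) w y z, hbianchi (T x) w y z, hpair x w (T y) z, hanti x w (T y) z, hpair x w y (T z), hanti x w y (T z), hbianchi x w y (T z), hpair (T x) w z y, hpair y x (T z) w, hpair y x z (T w), hpair y x (T w) z, hpair (T y) z w x, hpair y (T z) w x, hanti y (T z) w x, hpair y z (T w) x, hbianchi y z (T w) x, hpair (T y) w z x, h x y z w, h x y w z, h x z w y, h y x z w, h y x w z, h z x y w]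
  · linarith [hanti (T x) y z w, hbianchi (T x) y z w, hanti x (T y) z w, hbianchi x (T y) z w, hpair x y (T z) w, hanti x y (T z) w, hbianchi x y (T z) w, hpair x y z (T w), hanti x y z (T w), hbianchi x y z (T w), hanti (T x) y w z, hbianchi (T x) y w z, hanti x (T y) w z, hbianchi x (T y) w z, hpair x y (T w) z, hbianchi x y (T w) z, hanti x y w (T z), hbianchi x y w (T z), hpair (T x) z y w, hanti (T x) z y w, hbianchi (T x) z y w, hpair x (T z) y w, hanti x (T z) y w, hpair x z (T y) w, hanti x z (T y) w, hpair x z y (T w), hanti x z y (T w), hpair (T x) z w y, hpair x (T z) w y, hanti x (T z) w y, hpair x z (T w) y, hbianchi x z (T w) y, hpair (T x) w y z, hanti (T x) w y z, hbianchi (T x) w y z, hpair x (T w) y z, hbianchi x (T w) y z, hpair x w (T y) z, hanti x w (T y) z, hpair x w y (T z), hanti x w y (T z), hbianchi x w y (T z), hpair (T x) w z y, hpair y x (T z) w, hpair y x z (T w), hpair y x (T w) z, hpair (T y) z w x, hpair y (T z) w x, hanti y (T z) w x, hpair y z (T w) x, hbianchi y z (T w) x, hpair (T y) w z x, h x y z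 w, h x y w z, h x z w y, h y x z w, h y x w z]
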